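/- arXiv:1804.03436 — 2 statements merged into one kernel-verified Lean document; each statement's English description precedes it below -/
import Mathlib

section
/- If node m is an ancestor of node n in the buddy tree, then the address interval of n is contained in the address interval of m. -/
/-- Interval of addresses (in allocation units, with `M = 2^d`) covered by node `n`. -/
def itv (d n : ℕ) : Set ℕ :=
  Set.Ico ((n - 2 ^ Nat.log2 n) * 2 ^ (d - Nat.log2 n))
          ((n - 2 ^ Nat.log2 n + 1) * 2 ^ (d - Nat.log2 n))

/-- `m` is a (strict) ancestor of `n`: `m = n / 2^k` for some `k ≥ 1`. -/
def isAncestor (m n : ℕ) : Prop := ∃ k ≥ 1, m = n / 2 ^ k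

lemma itv_step (d n : ℕ) (hn : 2 ≤ n) (hnd : Nat.log2 n ≤ d) :
    itv d n ⊆ itv d (n / 2) := by
  set L := Nat.log2 n with hLdef
  have hL1 : 1 ≤ L := (Nat.le_log2 (by omega)).2 hn
  have hpow : 2 ^ L ≤ n := Nat.log2_self_le (by omega)
  have hlt : n < 2 ^ (L + 1) := Nat.lt_log2_self
  have hlogm : Nat.log2 (n / 2) = L - 1 := by
    rw [Nat.log2_eq_log_two, Nat.log_div_base, ← Nat.log2_eq_log_two]
  have hpowL : 2 ^ L = 2 ^ (L - 1) * 2 := by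
    rw [← pow_succ]; congr 1; omega
  have hm : n / 2 = 2 ^ (L - 1) + (n - 2 ^ L) / 2 := by omega
  have hd : d - (L - 1) = (d - L) + 1 := by omega
  intro x hx
  simp only [itv, Set.mem_Ico] at hx ⊢
  rw [hlogm, hm, hd, Nat.add_sub_cancel_left]
  obtain ⟨h1, h2⟩ := hx
  set c := n - 2 ^ L with hc
  constructor
  · calc c / 2 * 2 ^ (d - L + 1) = (c / 2 * 2) * 2 ^ (d - L) := by ring
    _ ≤ c * 2 ^ (d - L) := Nat.mul_le_mul_right _ (by omega)
    _ ≤ x := h1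
  · calc x < (c + 1) * 2 ^ (d - L) := h2
    _ ≤ ((c / 2 + 1) * 2) * 2 ^ (d - L) := Nat.mul_le_mul_right _ (by omega)
    _ = (c / 2 + 1) * 2 ^ (d - L + 1) := by ring

/-- If `m` is an ancestor of `n`, then the interval of `n` is contained
in the interval of `m`. -/
theorem ancestor_interval_subset (d m n : ℕ) (hm : 1 ≤ m) (hn : 1 ≤ n)
    (hnd : Nat.log2 n ≤ d) (h : isAncestor m n) :
    itv d n ⊆ itv d m := by
  obtain ⟨k, hk1, rfl⟩ := h
  revert hm hk1
  induction k with
  | zero => omega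
  | succ k ih =>
    intro hk1 hm
    rcases Nat.eq_zero_or_pos k with rfl | hk
    · have h2n : 2 ≤ n := by
        rw [pow_one] at hm; omega
      simpa using itv_step d n h2n hnd
    · have hdd : n / 2 ^ (k + 1) = n / 2 ^ k / 2 := by
        rw [pow_succ, Nat.div_div_eq_div_mul]
      have h2 : 2 ≤ n / 2 ^ k := by
        rw [hdd] at hm; omega
      have hlog : Nat.log2 (n / 2 ^ k) ≤ d := by
        rw [Nat.log2_eq_log_two] at *
        exact le_trans (Nat.log_mono_right (Nat.div_le_self _ _)) hnd
      refine (ih hk (by omega)).trans ?_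
      rw [hdd]
      exact itv_step d _ h2 hlog
end

section
/- If a node n is not an ancestor of, equal to, or a descendant of any allocated node in S, then the interval of n is disjoint from the interval of every node in S (i.e., the node is genuinely free). -/
/-- Any address in the interval of `n` recovers `n` by shifted division. -/
lemma node_of_mem (d n x : ℕ) (hn : 1 ≤ n) (hd : Nat.log2 n ≤ d)
    (hx : x ∈ itv d n) : (x + 2 ^ d) / 2 ^ (d - Nat.log2 n) = n := by
  have hle : 2 ^ Nat.log2 n ≤ n := Nat.log2_self_le (by omega)
  have hpow : 2 ^ d = 2 ^ Nat.log2 n * 2 ^ (d - Nat.log2 n) := by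
    rw [← pow_add]; congr 1; omega
  obtain ⟨h1, h2⟩ := hx
  apply Nat.div_eq_of_lt_le
  · calc n * 2 ^ (d - Nat.log2 n)
        = (n - 2 ^ Nat.log2 n) * 2 ^ (d - Nat.log2 n)
            + 2 ^ Nat.log2 n * 2 ^ (d - Nat.log2 n) := by rw [← add_mul]; congr 1; omega
      _ ≤ x + 2 ^ d := by rw [hpow]; omega
  · calc x + 2 ^ d
        < (n - 2 ^ Nat.log2 n + 1) * 2 ^ (d - Nat.log2 n)
            + 2 ^ Nat.log2 n * 2 ^ (d - Nat.log2 n) := by rw [hpow]; omega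
      _ = (n + 1) * 2 ^ (d - Nat.log2 n) := by rw [← add_mul]; congr 1; omega

/-- Two nodes with overlapping intervals are related (with the shallower one an
ancestor of, or equal to, the deeper one). -/
lemma related_of_not_disjoint (d m n : ℕ) (hm : 1 ≤ m) (hmd : Nat.log2 m ≤ d)
    (hn : 1 ≤ n) (hnd : Nat.log2 n ≤ d) (hLmn : Nat.log2 m ≤ Nat.log2 n)
    (h : ¬ Disjoint (itv d m) (itv d n)) : m = n / 2 ^ (Nat.log2 n - Nat.log2 m) := by
  obtain ⟨x, hxm, hxn⟩ := Set.not_disjoint_iff.mp h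
  have e1 := node_of_mem d m x hm hmd hxm
  have e2 := node_of_mem d n x hn hnd hxn
  have : 2 ^ (d - Nat.log2 n) * 2 ^ (Nat.log2 n - Nat.log2 m) = 2 ^ (d - Nat.log2 m) := by
    rw [← pow_add]; congr 1; omega
  calc m = (x + 2 ^ d) / 2 ^ (d - Nat.log2 m) := e1.symm
    _ = (x + 2 ^ d) / (2 ^ (d - Nat.log2 n) * 2 ^ (Nat.log2 n - Nat.log2 m)) := by rw [this]
    _ = (x + 2 ^ d) / 2 ^ (d - Nat.log2 n) / 2 ^ (Nat.log2 n - Nat.log2 m) :=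
        (Nat.div_div_eq_div_mul _ _ _).symm
    _ = n / 2 ^ (Nat.log2 n - Nat.log2 m) := by rw [e2]

/-- If a node `n` is neither an ancestor of, equal to, nor a descendant of any
allocated node of `S`, then its interval is disjoint from the interval of every
node of `S`: the node is genuinely free. -/
theorem unrelated_node_is_free (d : ℕ) (S : Set ℕ) (n : ℕ)
    (hS : ∀ a ∈ S, 1 ≤ a ∧ Nat.log2 a ≤ d)
    (hdisj : S.Pairwise fun a b => Disjoint (itv d a) (itv d b))
    (hn : 1 ≤ n) (hnd : Nat.log2 n ≤ d)
    (hfree : ∀ a ∈ S, ¬ isAncestor n a ∧ n ≠ a ∧ ¬ isAncestor a n) :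
    ∀ a ∈ S, Disjoint (itv d n) (itv d a) := by
  intro a ha
  obtain ⟨ha1, ha2⟩ := hS a ha
  obtain ⟨hanc1, hne, hanc2⟩ := hfree a ha
  by_contra h
  rcases le_or_gt (Nat.log2 n) (Nat.log2 a) with hL | hL
  · have := related_of_not_disjoint d n a hn hnd ha1 ha2 hL h
    rcases eq_or_lt_of_le hL with hE | hLt
    · exact hne (by simpa [← hE] using this)
    · exact hanc1 ⟨Nat.log2 a - Nat.log2 n, by omega, this⟩
  · have := related_of_not_disjoint d a n ha1 ha2 hn hnd hL.le
      (fun hd' => h hd'.symm)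
    exact hanc2 ⟨Nat.log2 n - Nat.log2 a, by omega, this⟩
end
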